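/- Probability that an uncovered cluster stays uncovered under amplified sampling: let A be an optimal cluster, and suppose there exists A′ ⊆ A with φ_C(A′) ≥ φ_C(A)/5 such that sampling any c ∈ A′ would cover A. If each point c is independently included with probability at least min(1, T·p(c)/2) where p(c) = d(c,C)/∑_{x∈X} d(x,C), then Pr[no point of A′ is sampled] ≤ exp(−T·φ_C(A)/(10·φ_C(X))). -/

import Mathlib

/-- distance of a point to a finite set of centers -/
noncomputable def dSet {X : Type*} [MetricSpace X] (x : X) (C : Finset X) : ℝ :=
  sInf ((fun c => dist x c) '' (C : Set X))

open Real Finset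

lemma dSet_nonneg {X : Type*} [MetricSpace X] (x : X) (C : Finset X) : 0 ≤ dSet x C :=
  Real.sInf_nonneg <| by
    rintro r ⟨c, _, rfl⟩
    exact dist_nonneg

lemma one_sub_le_exp_neg_of_min_one_le {x q : ℝ} (h : min 1 x ≤ q) : 1 - q ≤ exp (-x) := by
  rcases le_total 1 x with hx | hx
  · rw [min_eq_left hx] at h
    linarith [exp_pos (-x)]
  · rw [min_eq_right hx] at h
    linarith [add_one_le_exp (-x)]

lemma prod_one_sub_le_exp_neg_sum {ι : Type*} {s : Finset ι} {q x : ι → ℝ}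
    (hq1 : ∀ i ∈ s, q i ≤ 1) (hq : ∀ i ∈ s, min 1 (x i) ≤ q i) :
    ∏ i ∈ s, (1 - q i) ≤ exp (-∑ i ∈ s, x i) := by
  rw [← sum_neg_distrib, exp_sum]
  exact prod_le_prod (fun i hi => sub_nonneg.2 (hq1 i hi))
    fun i hi => one_sub_le_exp_neg_of_min_one_le (hq i hi)

theorem stmt_12_general {X : Type*} [MetricSpace X] [Fintype X]
    (C : Finset X) (A A' : Finset X)
    (T : ℝ) (hT : 0 ≤ T)
    (hA' : (∑ a ∈ A, dSet a C) / 5 ≤ ∑ a ∈ A', dSet a C)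
    (q : X → ℝ)
    (hq1 : ∀ c ∈ A', q c ≤ 1)
    (hq : ∀ c ∈ A', min 1 (T * (dSet c C / ∑ x : X, dSet x C) / 2) ≤ q c) :
    ∏ c ∈ A', (1 - q c) ≤
      Real.exp (-(T * ∑ a ∈ A, dSet a C) / (10 * ∑ x : X, dSet x C)) := by
  set S := ∑ x : X, dSet x C
  have hS : 0 ≤ S := sum_nonneg fun x _ => dSet_nonneg x C
  have hsum : ∑ c ∈ A', T * (dSet c C / S) / 2 = T / (2 * S) * ∑ c ∈ A', dSet c C := by
    rw [mul_sum]
    exact sum_congr rfl fun c _ => by ring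
  calc ∏ c ∈ A', (1 - q c) ≤ exp (-∑ c ∈ A', T * (dSet c C / S) / 2) :=
        prod_one_sub_le_exp_neg_sum hq1 hq
    _ ≤ exp (-(T * ∑ a ∈ A, dSet a C) / (10 * S)) := by
      rw [hsum, neg_div, exp_le_exp, neg_le_neg_iff,
        show (T * ∑ a ∈ A, dSet a C) / (10 * S) = T / (2 * S) * ((∑ a ∈ A, dSet a C) / 5) by ring]
      gcongr

/-- Probability that an uncovered cluster stays uncovered under amplified
sampling: let `A' ⊆ A` with `φ_C(A') ≥ φ_C(A)/5`. If each point `c` is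
independently included with probability `q c ≥ min(1, T·p(c)/2)` where
`p(c) = d(c,C)/∑_{x∈X} d(x,C)`, then the probability `∏_{c∈A'} (1 - q c)` that
no point of `A'` is sampled is at most `exp(−T·φ_C(A)/(10·φ_C(X)))`. -/
theorem stmt_12 {X : Type*} [MetricSpace X] [Fintype X]
    (C : Finset X) (A A' : Finset X) (hAA : A' ⊆ A)
    (T : ℝ) (hT : 0 ≤ T)
    (hpos : 0 < ∑ x : X, dSet x C)
    (hA' : (∑ a ∈ A, dSet a C) / 5 ≤ ∑ a ∈ A', dSet a C)
    (q : X → ℝ)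
    (hq1 : ∀ c ∈ A', q c ≤ 1)
    (hq : ∀ c ∈ A', min 1 (T * (dSet c C / ∑ x : X, dSet x C) / 2) ≤ q c) :
    ∏ c ∈ A', (1 - q c) ≤
      Real.exp (-(T * ∑ a ∈ A, dSet a C) / (10 * ∑ x : X, dSet x C)) :=
  stmt_12_general C A A' T hT hA' q hq1 hq
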